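/- arXiv:1705.01407 — 2 statements merged into one kernel-verified Lean document; each statement's English description precedes it below -/
import Mathlib

section
/- Let Q be a real symmetric positive semidefinite n×n matrix all of whose eigenvalues λ_1, …, λ_n lie in [0,1), so that A := (I − Q)⁻¹ is well defined and positive definite. If z is a random vector with law N_n(0, A), the multivariate Gaussian on ℝ^n with mean 0 and covariance matrix A, then the law of the quadratic form zᵀ Q z equals the pushforward of the standard Gaussian measure on ℝ^n under x ↦ ∑_{j=1}^n (λ_j/(1−λ_j)) x_j²; that is, zᵀ Q z is distributed as a weighted sum of n independent χ²_1 random variables with weights λ_j/(1−λ_j). -/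
open MeasureTheory Matrix ProbabilityTheory

/-- The standard Gaussian measure on `ℝ^n`, i.e. the product of `n` copies of `N(0,1)`. -/
noncomputable def stdGaussian (n : ℕ) : Measure (Fin n → ℝ) :=
  Measure.pi fun _ => gaussianReal 0 1

/-- The square root of a positive semidefinite matrix, as defined in the older Mathlib
(`Matrix.PosSemidef.sqrt`, since removed). -/
noncomputable def Matrix.PosSemidef.sqrt {n : Type*} [Fintype n] [DecidableEq n]
    {A : Matrix n n ℝ} (hA : A.PosSemidef) : Matrix n n ℝ :=
  hA.1.eigenvectorUnitary.1 * diagonal ((↑) ∘ (√·) ∘ hA.1.eigenvalues) *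
  (star hA.1.eigenvectorUnitary : Matrix n n ℝ)

/-- The multivariate Gaussian measure `N_d(m, S)` on `ℝ^d` with mean `m` and positive
semidefinite covariance matrix `S`: the law of `m + S^{1/2} Z` with `Z` standard Gaussian. -/
noncomputable def mvGaussian {d : ℕ} (m : Fin d → ℝ) (S : Matrix (Fin d) (Fin d) ℝ)
    (hS : S.PosSemidef) : Measure (Fin d → ℝ) :=
  Measure.map (fun x => m + hS.sqrt *ᵥ x) (stdGaussian d)

/-!
Diagonalize `Q = U diag(λ) Uᵀ`. Then `(1 - Q)⁻¹` and its square root `S` are functions of `Q`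
(`t ↦ (1 - t)⁻¹` and `t ↦ √(1 - t)⁻¹`), so for `z = S x` the quadratic form `zᵀ Q z = xᵀ S Q S x`
is `xᵀ f(Q) x` with `f t = t / (1 - t)`, i.e. `∑ j, f(λ_j) (Uᵀ x)_j²`. Since `Uᵀ` is orthogonal,
`Uᵀ x` is again standard Gaussian when `x` is.
-/

open scoped MatrixOrder
open WithLp

lemma stdGaussian_eq_map_ofLp (n : ℕ) :
    _root_.stdGaussian n =
      (ProbabilityTheory.stdGaussian (EuclideanSpace ℝ (Fin n))).map ofLp := by
  rw [← map_pi_eq_stdGaussian, Measure.map_map (by fun_prop) (by fun_prop)]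
  exact Measure.map_id.symm

lemma map_mulVec_stdGaussian {n : ℕ} {M : Matrix (Fin n) (Fin n) ℝ}
    (hM : M ∈ unitaryGroup (Fin n) ℝ) :
    (_root_.stdGaussian n).map (M *ᵥ ·) = _root_.stdGaussian n := by
  let e := Unitary.linearIsometryEquiv ⟨toEuclideanCLM (𝕜 := ℝ) M, Unitary.map_mem _ hM⟩
  have he : (M *ᵥ ·) ∘ ofLp = ofLp ∘ e := rfl
  rw [stdGaussian_eq_map_ofLp, Measure.map_map (by fun_prop) (by fun_prop), he,
    ← Measure.map_map (by fun_prop) (by fun_prop), stdGaussian_map]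

lemma Matrix.IsSymm.mulVec_dotProduct_mulVec_mulVec {ι R : Type*} [Fintype ι] [CommSemiring R]
    {S : Matrix ι ι R} (hS : S.IsSymm) (Q : Matrix ι ι R) (x : ι → R) :
    S *ᵥ x ⬝ᵥ Q *ᵥ S *ᵥ x = x ⬝ᵥ (S * Q * S) *ᵥ x := by
  rw [← mulVec_mulVec, ← mulVec_mulVec, dotProduct_mulVec x S, ← mulVec_transpose, hS.eq]

namespace Matrix

variable {ι : Type*} [Fintype ι] [DecidableEq ι]

lemma PosSemidef.sqrt_eq_cfc {A : Matrix ι ι ℝ} (hA : A.PosSemidef) :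
    hA.sqrt = cfc Real.sqrt A := by
  rw [hA.1.cfc_eq, IsHermitian.cfc, Unitary.conjStarAlgAut_apply]
  rfl

lemma PosSemidef.isSymm_sqrt {A : Matrix ι ι ℝ} (hA : A.PosSemidef) : hA.sqrt.IsSymm := by
  rw [hA.sqrt_eq_cfc]
  exact isHermitian_iff_isSymm.1 (cfc_predicate _ A)

lemma IsHermitian.dotProduct_cfc_mulVec {Q : Matrix ι ι ℝ} (hQ : Q.IsHermitian)
    (f : ℝ → ℝ) (x : ι → ℝ) :
    x ⬝ᵥ cfc f Q *ᵥ x = ∑ j, f (hQ.eigenvalues j) *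
      (star (hQ.eigenvectorUnitary : Matrix ι ι ℝ) *ᵥ x) j ^ 2 := by
  rw [hQ.cfc_eq, IsHermitian.cfc, Unitary.conjStarAlgAut_apply]
  simp only [star_eq_conjTranspose, conjTranspose_eq_transpose_of_trivial]
  rw [← mulVec_mulVec, ← mulVec_mulVec, dotProduct_mulVec, ← mulVec_transpose]
  simp only [dotProduct, mulVec_diagonal, Function.comp_apply, RCLike.ofReal_real_eq_id, id]
  exact Finset.sum_congr rfl fun j _ => by ring

section SpectrumLtOne

variable {Q : Matrix ι ι ℝ} (hQ : IsSelfAdjoint Q) (hlt : ∀ t ∈ spectrum ℝ Q, t < 1)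
include hQ hlt

lemma inv_one_sub_eq_cfc : (1 - Q)⁻¹ = cfc (fun t : ℝ => (1 - t)⁻¹) Q := by
  have hsub : cfc (fun t : ℝ => 1 - t) Q = 1 - Q := by
    rw [cfc_sub (fun _ => 1) (fun t => t) Q (Q.finite_spectrum.continuousOn _)
      (Q.finite_spectrum.continuousOn _), cfc_const_one ℝ Q, cfc_id' ℝ Q]
  rw [cfc_inv _ Q (fun t ht => (sub_pos.2 (hlt t ht)).ne') (Q.finite_spectrum.continuousOn _),
    hsub, nonsing_inv_eq_ringInverse]

lemma posDef_inv_one_sub : ((1 - Q)⁻¹).PosDef := by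
  rw [inv_one_sub_eq_cfc hQ hlt, ← isStrictlyPositive_iff_posDef,
    cfc_isStrictlyPositive_iff _ Q (Q.finite_spectrum.continuousOn _)]
  exact fun t ht => inv_pos.2 (sub_pos.2 (hlt t ht))

lemma sqrt_inv_one_sub_eq_cfc (hA : ((1 - Q)⁻¹).PosSemidef) :
    hA.sqrt = cfc (fun t : ℝ => √(1 - t)⁻¹) Q := by
  rw [hA.sqrt_eq_cfc, inv_one_sub_eq_cfc hQ hlt, ← cfc_comp Real.sqrt _ Q
    (hg := (Q.finite_spectrum.image _).continuousOn _) (hf := Q.finite_spectrum.continuousOn _)]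
  rfl

lemma sqrt_inv_one_sub_mul_mul_self (hA : ((1 - Q)⁻¹).PosSemidef) :
    hA.sqrt * Q * hA.sqrt = cfc (fun t : ℝ => t / (1 - t)) Q := by
  have hcont : ∀ f : ℝ → ℝ, ContinuousOn f (spectrum ℝ Q) := Q.finite_spectrum.continuousOn
  calc hA.sqrt * Q * hA.sqrt = cfc (fun t : ℝ => √(1 - t)⁻¹ * t * √(1 - t)⁻¹) Q := by
        rw [cfc_mul (fun t : ℝ => √(1 - t)⁻¹ * t) _ Q (hcont _) (hcont _),
          cfc_mul _ (fun t : ℝ => t) Q (hcont _) (hcont _), cfc_id' ℝ Q,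
          sqrt_inv_one_sub_eq_cfc hQ hlt]
    _ = cfc (fun t : ℝ => t / (1 - t)) Q := cfc_congr fun t ht => by
        rw [mul_right_comm, Real.mul_self_sqrt (inv_nonneg.2 (sub_pos.2 (hlt t ht)).le),
          div_eq_inv_mul]

end SpectrumLtOne

end Matrix

/-- Let `Q` be symmetric positive semidefinite with all eigenvalues in `[0,1)`.
Then `A := (I − Q)⁻¹` is well defined and positive definite, and if `z ~ N_n(0, A)` then the
law of `zᵀ Q z` is the pushforward of the standard Gaussian measure under
`x ↦ ∑ j, (λ_j / (1 − λ_j)) x_j²`, i.e. a weighted sum of independent `χ²₁` variables with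
weights `λ_j / (1 − λ_j)`. -/
theorem stmt_4 (n : ℕ) (Q : Matrix (Fin n) (Fin n) ℝ) (hQ : Q.PosSemidef)
    (hev : ∀ j, hQ.isHermitian.eigenvalues j ∈ Set.Ico (0 : ℝ) 1) :
    ((1 - Q)⁻¹).PosDef ∧
      ∀ hA : ((1 - Q)⁻¹).PosSemidef,
        Measure.map (fun z : Fin n → ℝ => z ⬝ᵥ Q *ᵥ z) (mvGaussian 0 ((1 - Q)⁻¹) hA) =
          Measure.map (fun x : Fin n → ℝ =>
            ∑ j, (hQ.isHermitian.eigenvalues j / (1 - hQ.isHermitian.eigenvalues j)) *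
              (x j) ^ 2) (stdGaussian n) := by
  have hlt : ∀ t ∈ spectrum ℝ Q, t < 1 := by
    rw [hQ.isHermitian.spectrum_real_eq_range_eigenvalues]
    rintro _ ⟨j, rfl⟩
    exact (hev j).2
  have hQsa : IsSelfAdjoint Q := hQ.isHermitian
  refine ⟨posDef_inv_one_sub hQsa hlt, fun hA => ?_⟩
  have hquad : (fun z : Fin n → ℝ => z ⬝ᵥ Q *ᵥ z) ∘ (fun x => 0 + hA.sqrt *ᵥ x) =
      (fun x : Fin n → ℝ => ∑ j, (hQ.isHermitian.eigenvalues j /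
        (1 - hQ.isHermitian.eigenvalues j)) * (x j) ^ 2) ∘
        (star (hQ.isHermitian.eigenvectorUnitary : Matrix (Fin n) (Fin n) ℝ) *ᵥ ·) := by
    ext x
    simp only [Function.comp_apply, zero_add,
      hA.isSymm_sqrt.mulVec_dotProduct_mulVec_mulVec,
      sqrt_inv_one_sub_mul_mul_self hQsa hlt hA, hQ.isHermitian.dotProduct_cfc_mulVec]
  rw [mvGaussian, Measure.map_map (by fun_prop) (by fun_prop), hquad,
    ← Measure.map_map (by fun_prop) (by fun_prop),
    map_mulVec_stdGaussian (Unitary.star_mem hQ.isHermitian.eigenvectorUnitary.2)]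
end

section
/- Consider the CAPM case (k = 1, so m = k+1 = 2 parameters). Let Z_1, Z_2 be coordinates of a random vector with the standard Gaussian law on ℝ², and for each t ∈ ℕ let λ_{1,t}, λ_{2,t} ∈ (0,1) and c_t ≥ 0 satisfy: λ_{j,t} → 1 for j = 1,2; (1−λ_{1,t})/(1−λ_{2,t}) → 1; and c_t² · √((1−λ_{1,t})(1−λ_{2,t})) → C for some constant C ∈ (0, ∞). Then the probability of type II error t_{2,t} := P( (λ_{1,t}/(1−λ_{1,t})) Z_1² + (λ_{2,t}/(1−λ_{2,t})) Z_2² ≤ c_t² ) converges to 1 − e^{−C/2} as t → ∞. -/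
open MeasureTheory ProbabilityTheory Filter

/-- The standard Gaussian measure on `ℝ²`, i.e. the product of two copies of `N(0,1)`. -/
noncomputable def stdGaussian2 : Measure (Fin 2 → ℝ) :=
  Measure.pi fun _ => gaussianReal 0 1

/-!
The ellipse `{a x² + b y² ≤ r}` lies between the discs `{x² + y² ≤ r / max a b}` and
`{x² + y² ≤ r / min a b}`, and in polar coordinates the standard Gaussian gives the disc
`{x² + y² ≤ s}` mass `1 - e^{-s/2}`. For `a = λ₁/(1-λ₁)`, `b = λ₂/(1-λ₂)` and `r = c²` both radii
tend to `C`, because `c²(1-λ₁) = c²√((1-λ₁)(1-λ₂)) · √((1-λ₁)/(1-λ₂))` and the last factor tends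
to `1`.
-/

open Real Set Topology
open scoped ENNReal

instance : IsProbabilityMeasure stdGaussian2 := by
  unfold stdGaussian2; infer_instance

lemma stdGaussian2_setOf (p : ℝ → ℝ → Prop) :
    stdGaussian2 {z | p (z 0) (z 1)} =
      (gaussianReal 0 1).prod (gaussianReal 0 1) {q | p q.1 q.2} :=
  (measurePreserving_finTwoArrow (gaussianReal 0 1)).measure_preimage_equiv {q | p q.1 q.2}

lemma gaussianReal_prod_gaussianReal :
    (gaussianReal 0 1).prod (gaussianReal 0 1) =
      volume.withDensity fun q : ℝ × ℝ =>
        ENNReal.ofReal ((2 * π)⁻¹ * exp (-(q.1 ^ 2 + q.2 ^ 2) / 2)) := by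
  rw [gaussianReal_of_var_ne_zero 0 one_ne_zero, prod_withDensity (measurable_gaussianPDF _ _)
    (measurable_gaussianPDF _ _), ← Measure.volume_eq_prod]
  congr 1
  funext q
  rw [gaussianPDF, gaussianPDF, ← ENNReal.ofReal_mul (gaussianPDFReal_nonneg _ _ _)]
  congr 1
  simp only [gaussianPDFReal, NNReal.coe_one, mul_one, sub_zero]
  rw [mul_mul_mul_comm, ← mul_inv, mul_self_sqrt (by positivity), ← exp_add]
  ring_nf

lemma lintegral_comp_sq_add_sq {h : ℝ → ℝ≥0∞} (hh : Measurable h) :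
    ∫⁻ p : ℝ × ℝ, h (p.1 ^ 2 + p.2 ^ 2) =
      ENNReal.ofReal (2 * π) * ∫⁻ ρ in Ioi 0, ENNReal.ofReal ρ * h (ρ ^ 2) := by
  rw [← lintegral_comp_polarCoord_symm]
  have hpolar : ∀ q : ℝ × ℝ, (polarCoord.symm q).1 ^ 2 + (polarCoord.symm q).2 ^ 2 = q.1 ^ 2 := by
    intro q
    simp only [polarCoord_symm_apply]
    linear_combination q.1 ^ 2 * cos_sq_add_sin_sq q.2
  simp_rw [hpolar, smul_eq_mul, polarCoord_target, Measure.volume_eq_prod, ← Measure.prod_restrict]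
  have := lintegral_prod_mul (μ := volume.restrict (Ioi 0)) (ν := volume.restrict (Ioo (-π) π))
    (f := fun ρ => ENNReal.ofReal ρ * h (ρ ^ 2)) (g := fun _ => 1) (by fun_prop) aemeasurable_const
  simp only [mul_one, lintegral_const, Measure.restrict_apply_univ, volume_Ioo] at this
  rw [this, mul_comm]
  ring_nf

lemma integral_mul_exp_neg_sq_div_two (b : ℝ) :
    ∫ x in (0 : ℝ)..b, x * exp (-x ^ 2 / 2) = 1 - exp (-b ^ 2 / 2) := by
  have hderiv : ∀ x ∈ uIcc 0 b,
      HasDerivAt (fun y => -exp (-y ^ 2 / 2)) (x * exp (-x ^ 2 / 2)) x := fun x _ =>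
    ((hasDerivAt_pow 2 x).neg.div_const 2).exp.neg.congr_deriv (by simp only [Pi.neg_apply]; ring)
  rw [intervalIntegral.integral_eq_sub_of_hasDerivAt hderiv
    (Continuous.intervalIntegrable (by fun_prop) _ _)]
  simp [neg_add_eq_sub]

lemma stdGaussian2_real_disk {r : ℝ} (hr : 0 ≤ r) :
    stdGaussian2.real {z | z 0 ^ 2 + z 1 ^ 2 ≤ r} = 1 - exp (-r / 2) := by
  set g : ℝ → ℝ≥0∞ := fun s => ENNReal.ofReal ((2 * π)⁻¹ * exp (-s / 2))
  have hdisk : MeasurableSet {q : ℝ × ℝ | q.1 ^ 2 + q.2 ^ 2 ≤ r} :=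
    measurableSet_le (by fun_prop) measurable_const
  have hradial : ∀ ρ ∈ Ioi (0 : ℝ), ENNReal.ofReal ρ * (Iic r).indicator g (ρ ^ 2) =
      (Iic √r).indicator (fun ρ => ENNReal.ofReal ((2 * π)⁻¹ * (ρ * exp (-ρ ^ 2 / 2)))) ρ := by
    intro ρ hρ
    by_cases hρr : ρ ≤ √r
    · rw [indicator_of_mem (s := Iic r) ((le_sqrt' hρ).1 hρr),
        indicator_of_mem (s := Iic √r) hρr, ← ENNReal.ofReal_mul hρ.le]
      ring_nf
    · rw [indicator_of_notMem (s := Iic r) (fun h => hρr ((le_sqrt' hρ).2 h)),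
        indicator_of_notMem (s := Iic √r) hρr, mul_zero]
  have hint : IntegrableOn (fun ρ => (2 * π)⁻¹ * (ρ * exp (-ρ ^ 2 / 2))) (Ioc 0 √r) :=
    Continuous.integrableOn_Ioc (by fun_prop)
  rw [measureReal_def, stdGaussian2_setOf (fun x y => x ^ 2 + y ^ 2 ≤ r),
    gaussianReal_prod_gaussianReal, withDensity_apply _ hdisk, ← lintegral_indicator hdisk]
  change ENNReal.toReal (∫⁻ q : ℝ × ℝ, (Iic r).indicator g (q.1 ^ 2 + q.2 ^ 2)) = _
  rw [lintegral_comp_sq_add_sq ((by fun_prop : Measurable g).indicator measurableSet_Iic),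
    setLIntegral_congr_fun measurableSet_Ioi hradial,
    setLIntegral_indicator measurableSet_Iic, inter_comm, Ioi_inter_Iic,
    ← ofReal_integral_eq_lintegral_ofReal hint
      (ae_restrict_of_forall_mem measurableSet_Ioc fun ρ hρ =>
        mul_nonneg (by positivity) (mul_nonneg hρ.1.le (exp_pos _).le)),
    ← ENNReal.ofReal_mul (by positivity), integral_const_mul,
    ← intervalIntegral.integral_of_le (sqrt_nonneg r), integral_mul_exp_neg_sq_div_two,
    ← mul_assoc, mul_inv_cancel₀ (by positivity), one_mul, sq_sqrt hr,
    ENNReal.toReal_ofReal (sub_nonneg.2 (exp_le_one_iff.2 (by linarith)))]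

section Ellipse

variable {a b r : ℝ}

lemma one_sub_exp_le_stdGaussian2_real_ellipse (ha : 0 < a) (hr : 0 ≤ r) :
    1 - exp (-(r / max a b) / 2) ≤ stdGaussian2.real {z | a * z 0 ^ 2 + b * z 1 ^ 2 ≤ r} := by
  have hmax : 0 < max a b := lt_max_of_lt_left ha
  rw [← stdGaussian2_real_disk (div_nonneg hr hmax.le)]
  refine measureReal_mono fun z (hz : z 0 ^ 2 + z 1 ^ 2 ≤ r / max a b) => ?_
  rw [le_div_iff₀ hmax] at hz
  calc a * z 0 ^ 2 + b * z 1 ^ 2 ≤ max a b * z 0 ^ 2 + max a b * z 1 ^ 2 := by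
        gcongr
        exacts [le_max_left a b, le_max_right a b]
    _ = (z 0 ^ 2 + z 1 ^ 2) * max a b := by ring
    _ ≤ r := hz

lemma stdGaussian2_real_ellipse_le_one_sub_exp (ha : 0 < a) (hb : 0 < b) (hr : 0 ≤ r) :
    stdGaussian2.real {z | a * z 0 ^ 2 + b * z 1 ^ 2 ≤ r} ≤ 1 - exp (-(r / min a b) / 2) := by
  have hmin : 0 < min a b := lt_min ha hb
  rw [← stdGaussian2_real_disk (div_nonneg hr hmin.le)]
  refine measureReal_mono fun z (hz : a * z 0 ^ 2 + b * z 1 ^ 2 ≤ r) => ?_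
  show z 0 ^ 2 + z 1 ^ 2 ≤ r / min a b
  rw [le_div_iff₀ hmin]
  calc (z 0 ^ 2 + z 1 ^ 2) * min a b = min a b * z 0 ^ 2 + min a b * z 1 ^ 2 := by ring
    _ ≤ a * z 0 ^ 2 + b * z 1 ^ 2 := by
        gcongr
        exacts [min_le_left a b, min_le_right a b]
    _ ≤ r := hz

lemma div_max_eq_min_div (hr : 0 ≤ r) (ha : 0 < a) (hb : 0 < b) :
    r / max a b = min (r / a) (r / b) := by
  rcases le_total a b with h | h
  · rw [max_eq_right h, min_eq_right (div_le_div_of_nonneg_left hr ha h)]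
  · rw [max_eq_left h, min_eq_left (div_le_div_of_nonneg_left hr hb h)]

lemma div_min_eq_max_div (hr : 0 ≤ r) (ha : 0 < a) (hb : 0 < b) :
    r / min a b = max (r / a) (r / b) := by
  rcases le_total a b with h | h
  · rw [min_eq_left h, max_eq_left (div_le_div_of_nonneg_left hr ha h)]
  · rw [min_eq_right h, max_eq_right (div_le_div_of_nonneg_left hr hb h)]

end Ellipse

lemma tendsto_mul_of_tendsto_mul_sqrt_mul {ι : Type*} {l : Filter ι} {u x y : ι → ℝ} {C : ℝ}
    (hx : ∀ i, 0 ≤ x i) (hy : ∀ i, 0 < y i) (hxy : Tendsto (fun i => x i / y i) l (𝓝 1))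
    (hu : Tendsto (fun i => u i * √(x i * y i)) l (𝓝 C)) :
    Tendsto (fun i => u i * x i) l (𝓝 C) := by
  have hsqrt : ∀ i, √(x i * y i) * √(x i / y i) = x i := fun i => by
    rw [← sqrt_mul (mul_nonneg (hx i) (hy i).le),
      show x i * y i * (x i / y i) = x i * x i by field_simp [(hy i).ne'], sqrt_mul_self (hx i)]
  simpa [mul_assoc, hsqrt] using hu.mul hxy.sqrt

lemma tendsto_div_odds {ι : Type*} {l : Filter ι} {lam mu r : ι → ℝ} {C : ℝ}
    (hlam : ∀ i, lam i ≤ 1) (hmu : ∀ i, mu i < 1)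
    (hlim : Tendsto lam l (𝓝 1)) (hratio : Tendsto (fun i => (1 - lam i) / (1 - mu i)) l (𝓝 1))
    (hr : Tendsto (fun i => r i * √((1 - lam i) * (1 - mu i))) l (𝓝 C)) :
    Tendsto (fun i => r i / (lam i / (1 - lam i))) l (𝓝 C) := by
  have h : Tendsto (fun i => r i * (1 - lam i) / lam i) l (𝓝 (C / 1)) :=
    (tendsto_mul_of_tendsto_mul_sqrt_mul (fun i => sub_nonneg.2 (hlam i))
      (fun i => sub_pos.2 (hmu i)) hratio hr).div hlim one_ne_zero
  simpa only [div_one, div_div_eq_mul_div] using h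

theorem stmt_9_general (lam1 lam2 : ℕ → ℝ) (c : ℕ → ℝ) (C : ℝ)
    (hlam1 : ∀ t, lam1 t ∈ Set.Ioo (0 : ℝ) 1) (hlam2 : ∀ t, lam2 t ∈ Set.Ioo (0 : ℝ) 1)
    (hlim1 : Tendsto lam1 atTop (nhds 1)) (hlim2 : Tendsto lam2 atTop (nhds 1))
    (hratio : Tendsto (fun t => (1 - lam1 t) / (1 - lam2 t)) atTop (nhds 1))
    (hcC : Tendsto (fun t => (c t) ^ 2 * Real.sqrt ((1 - lam1 t) * (1 - lam2 t)))
      atTop (nhds C)) :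
    Tendsto (fun t =>
        (stdGaussian2 {z | lam1 t / (1 - lam1 t) * (z 0) ^ 2 +
          lam2 t / (1 - lam2 t) * (z 1) ^ 2 ≤ (c t) ^ 2}).toReal)
      atTop (nhds (1 - Real.exp (-C / 2))) := by
  have ha t : 0 < lam1 t / (1 - lam1 t) := div_pos (hlam1 t).1 (sub_pos.2 (hlam1 t).2)
  have hb t : 0 < lam2 t / (1 - lam2 t) := div_pos (hlam2 t).1 (sub_pos.2 (hlam2 t).2)
  have hra := tendsto_div_odds (fun t => (hlam1 t).2.le) (fun t => (hlam2 t).2) hlim1 hratio hcC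
  have hrb := tendsto_div_odds (fun t => (hlam2 t).2.le) (fun t => (hlam1 t).2) hlim2
    (by simpa using hratio.inv₀ one_ne_zero) (by simpa only [mul_comm (1 - lam2 _)] using hcC)
  have hF : Continuous fun s : ℝ => 1 - exp (-s / 2) := by fun_prop
  have hlow := (hF.tendsto C).comp (min_self C ▸ hra.min hrb)
  have hupp := (hF.tendsto C).comp (max_self C ▸ hra.max hrb)
  simp only [Function.comp_def,
    ← div_max_eq_min_div (sq_nonneg (c _)) (ha _) (hb _),
    ← div_min_eq_max_div (sq_nonneg (c _)) (ha _) (hb _)] at hlow hupp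
  exact tendsto_of_tendsto_of_tendsto_of_le_of_le hlow hupp
    (fun t => one_sub_exp_le_stdGaussian2_real_ellipse (ha t) (sq_nonneg _))
    (fun t => stdGaussian2_real_ellipse_le_one_sub_exp (ha t) (hb t) (sq_nonneg _))

/-- CAPM case, `m = 2`: Let `(Z₁, Z₂)` be standard Gaussian on `ℝ²`, and for
each `t` let `λ_{1,t}, λ_{2,t} ∈ (0,1)` and `c_t ≥ 0` with `λ_{j,t} → 1`,
`(1−λ_{1,t})/(1−λ_{2,t}) → 1`, and `c_t²·√((1−λ_{1,t})(1−λ_{2,t})) → C ∈ (0,∞)`. Then the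
type II error `t_{2,t} = P((λ_{1,t}/(1−λ_{1,t})) Z₁² + (λ_{2,t}/(1−λ_{2,t})) Z₂² ≤ c_t²)`
converges to `1 − e^{−C/2}`. -/
theorem stmt_9 (lam1 lam2 : ℕ → ℝ) (c : ℕ → ℝ) (C : ℝ)
    (hlam1 : ∀ t, lam1 t ∈ Set.Ioo (0 : ℝ) 1) (hlam2 : ∀ t, lam2 t ∈ Set.Ioo (0 : ℝ) 1)
    (hc0 : ∀ t, 0 ≤ c t)
    (hlim1 : Tendsto lam1 atTop (nhds 1)) (hlim2 : Tendsto lam2 atTop (nhds 1))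
    (hratio : Tendsto (fun t => (1 - lam1 t) / (1 - lam2 t)) atTop (nhds 1))
    (hC : 0 < C)
    (hcC : Tendsto (fun t => (c t) ^ 2 * Real.sqrt ((1 - lam1 t) * (1 - lam2 t)))
      atTop (nhds C)) :
    Tendsto (fun t =>
        (stdGaussian2 {z | lam1 t / (1 - lam1 t) * (z 0) ^ 2 +
          lam2 t / (1 - lam2 t) * (z 1) ^ 2 ≤ (c t) ^ 2}).toReal)
      atTop (nhds (1 - Real.exp (-C / 2))) :=
  stmt_9_general lam1 lam2 c C hlam1 hlam2 hlim1 hlim2 hratio hcC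
end
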